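/- Suppose the link function Q satisfies (A1) g'(x) = g'(Q(x)) for all x ∈ 𝒳⁻, (A2) ω(x) + ω(Q(x)) ≥ 0 for all x ∈ 𝒳⁻, (A3) ∫_{𝒳⁻} ω(x)(1 − Q'(x)) g'(x) dx = 0, and additionally (A4) ∫_{𝒳⁻} ω(x)(1 − Q'(x)) dx = 0. Then the total transformed weight equals the total original weight: ∫_{𝒳} ω(x) dx = ∫_{𝒳 \ 𝒳⁻} ω̃(x) dx. -/

import Mathlib

/-!
Split `𝒳` into `S = {ω < 0}` and its complement `T`. Since `Q` is injective with `Q' > 0`, the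
change of variables `y = Q x` turns `∫_{Q(S)} ω̃` into `∫_S (ω + ω ∘ Q) Q'`, i.e. into
`∫_S ω Q' + ∫_{Q(S)} ω`, while `ω̃ = ω` on `T \ Q(S)`. Hence `∫_T ω̃ = ∫_S ω Q' + ∫_T ω`, and (A4)
says exactly that `∫_S ω Q' = ∫_S ω`. As `ω` is only a.e. measurable, `S` is merely
null-measurable; the change of variables still applies because a differentiable map sends null
sets to null sets.
-/

open MeasureTheory Set

section ChangeOfVariables

variable {F : Type*} [NormedAddCommGroup F] [NormedSpace ℝ F] {s : Set ℝ} {f f' : ℝ → ℝ}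

theorem exists_measurable_subset_image_ae_eq (hs : NullMeasurableSet s)
    (hf' : ∀ x ∈ s, HasDerivWithinAt f (f' x) s x) (hf : InjOn f s) :
    ∃ t ⊆ s, MeasurableSet t ∧ t =ᵐ[volume] s ∧
      MeasurableSet (f '' t) ∧ f '' t =ᵐ[volume] f '' s := by
  obtain ⟨t, hts, ht, hts_ae⟩ := hs.exists_measurable_subset_ae_eq
  have himage_null : volume (f '' (s \ t)) = 0 :=
    addHaar_image_eq_zero_of_differentiableOn_of_addHaar_eq_zero volume
      (fun x hx => (hf' x hx.1).differentiableWithinAt.mono sdiff_subset)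
      (ae_eq_set.1 hts_ae).2
  refine ⟨t, hts, ht, hts_ae, ?_, ?_⟩
  · exact ht.image_of_continuousOn_injOn
      (fun x hx => ((hf' x (hts hx)).continuousWithinAt).mono hts) (hf.mono hts)
  · refine ae_eq_set.2 ⟨by simp [sdiff_eq_empty.2 (image_mono hts)], ?_⟩
    refine measure_mono_null ?_ himage_null
    rintro _ ⟨⟨x, hx, rfl⟩, hxt⟩
    exact ⟨x, ⟨hx, fun h => hxt ⟨x, h, rfl⟩⟩, rfl⟩

theorem MeasureTheory.NullMeasurableSet.image_of_hasDerivWithinAt_injOn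
    (hs : NullMeasurableSet s) (hf' : ∀ x ∈ s, HasDerivWithinAt f (f' x) s x) (hf : InjOn f s) :
    NullMeasurableSet (f '' s) := by
  obtain ⟨_, -, -, -, hft, hft_ae⟩ := exists_measurable_subset_image_ae_eq hs hf' hf
  exact hft.nullMeasurableSet.congr hft_ae

theorem integrableOn_image_iff_integrableOn_abs_deriv_smul₀ (hs : NullMeasurableSet s)
    (hf' : ∀ x ∈ s, HasDerivWithinAt f (f' x) s x) (hf : InjOn f s) (g : ℝ → F) :
    IntegrableOn g (f '' s) ↔ IntegrableOn (fun x => |f' x| • g (f x)) s := by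
  obtain ⟨t, hts, ht, hts_ae, -, hft_ae⟩ := exists_measurable_subset_image_ae_eq hs hf' hf
  rw [← integrableOn_congr_set_ae hft_ae, ← integrableOn_congr_set_ae hts_ae]
  exact integrableOn_image_iff_integrableOn_abs_deriv_smul ht
    (fun x hx => (hf' x (hts hx)).mono hts) (hf.mono hts) g

theorem integral_image_eq_integral_abs_deriv_smul₀ (hs : NullMeasurableSet s)
    (hf' : ∀ x ∈ s, HasDerivWithinAt f (f' x) s x) (hf : InjOn f s) (g : ℝ → F) :
    ∫ x in f '' s, g x = ∫ x in s, |f' x| • g (f x) := by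
  obtain ⟨t, hts, ht, hts_ae, -, hft_ae⟩ := exists_measurable_subset_image_ae_eq hs hf' hf
  rw [← setIntegral_congr_set hft_ae, ← setIntegral_congr_set hts_ae]
  exact integral_image_eq_integral_abs_deriv_smul ht
    (fun x hx => (hf' x (hts hx)).mono hts) (hf.mono hts) g

theorem abs_deriv_smul_ae_eq_mul_deriv (hs : NullMeasurableSet s) (hpos : ∀ x ∈ s, 0 < f' x)
    (g : ℝ → ℝ) :
    (fun x => |f' x| • g (f x)) =ᵐ[volume.restrict s] fun x => g (f x) * f' x := by
  filter_upwards [ae_restrict_mem₀ hs] with x hx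
  rw [smul_eq_mul, abs_of_pos (hpos x hx), mul_comm]

theorem MeasureTheory.IntegrableOn.comp_mul_deriv₀ {g : ℝ → ℝ} (hg : IntegrableOn g (f '' s))
    (hs : NullMeasurableSet s) (hf' : ∀ x ∈ s, HasDerivWithinAt f (f' x) s x)
    (hpos : ∀ x ∈ s, 0 < f' x) (hf : InjOn f s) :
    IntegrableOn (fun x => g (f x) * f' x) s :=
  ((integrableOn_image_iff_integrableOn_abs_deriv_smul₀ hs hf' hf g).1 hg).congr_fun_ae
    (abs_deriv_smul_ae_eq_mul_deriv hs hpos g)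

theorem integral_image_eq_integral_mul_deriv₀ (hs : NullMeasurableSet s)
    (hf' : ∀ x ∈ s, HasDerivWithinAt f (f' x) s x) (hpos : ∀ x ∈ s, 0 < f' x) (hf : InjOn f s)
    (g : ℝ → ℝ) : ∫ x in f '' s, g x = ∫ x in s, g (f x) * f' x := by
  rw [integral_image_eq_integral_abs_deriv_smul₀ hs hf' hf,
    integral_congr_ae (abs_deriv_smul_ae_eq_mul_deriv hs hpos g)]

end ChangeOfVariables

theorem nullMeasurableSet_sep_neg {α : Type*} [MeasurableSpace α] {μ : Measure α} {s : Set α}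
    (hs : NullMeasurableSet s μ) {f : α → ℝ} (hf : AEMeasurable f (μ.restrict s)) :
    NullMeasurableSet {x ∈ s | f x < 0} μ := by
  have := (nullMeasurableSet_restrict hs).1
    (nullMeasurableSet_lt hf (aemeasurable_const (b := (0 : ℝ))))
  rwa [inter_comm] at this

theorem prop1_part2_general
    (𝒳 : Set ℝ) (h𝒳 : MeasurableSet 𝒳)
    (ω Q Q' ωt : ℝ → ℝ)
    (hωint : IntegrableOn ω 𝒳)
    (hQdiff : ∀ x ∈ {x ∈ 𝒳 | ω x < 0}, HasDerivAt Q (Q' x) x)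
    (hQ'pos : ∀ x ∈ {x ∈ 𝒳 | ω x < 0}, 0 < Q' x)
    (hQinj : Set.InjOn Q {x ∈ 𝒳 | ω x < 0})
    (hQmaps : Set.MapsTo Q {x ∈ 𝒳 | ω x < 0} {x ∈ 𝒳 | 0 ≤ ω x})
    -- defining properties of the transformed weights ω̃
    (hωt_link : ∀ x ∈ {x ∈ 𝒳 | ω x < 0}, ωt (Q x) = ω x + ω (Q x))
    (hωt_pos : ∀ x ∈ {x ∈ 𝒳 | 0 ≤ ω x} \ (Q '' {x ∈ 𝒳 | ω x < 0}), ωt x = ω x)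
    -- integrability assumptions
    (hint2 : IntegrableOn ωt {x ∈ 𝒳 | 0 ≤ ω x})
    (hint3 : IntegrableOn (fun x => ω x * Q' x) {x ∈ 𝒳 | ω x < 0})
    -- (A4): additional derivative condition on Q
    (hA4 : ∫ x in {x ∈ 𝒳 | ω x < 0}, ω x * (1 - Q' x) = 0) :
    ∫ x in 𝒳, ω x = ∫ x in 𝒳 \ {x ∈ 𝒳 | ω x < 0}, ωt x := by
  set S := {x ∈ 𝒳 | ω x < 0}
  set T := {x ∈ 𝒳 | 0 ≤ ω x}
  have hST : 𝒳 \ S = T := by ext x; simp [S, T]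
  have hS : NullMeasurableSet S :=
    nullMeasurableSet_sep_neg h𝒳.nullMeasurableSet hωint.aemeasurable
  have hS𝒳 : S ⊆ 𝒳 := sep_subset _ _
  have hT𝒳 : T ⊆ 𝒳 := sep_subset _ _
  have hQ : ∀ x ∈ S, HasDerivWithinAt Q (Q' x) S x := fun x hx => (hQdiff x hx).hasDerivWithinAt
  have hQS : NullMeasurableSet (Q '' S) := hS.image_of_hasDerivWithinAt_injOn hQ hQinj
  have hQST : Q '' S ⊆ T := hQmaps.image_subset
  have hcov := integral_image_eq_integral_mul_deriv₀ hS hQ hQ'pos hQinj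
  have hωQ : IntegrableOn (fun x => ω (Q x) * Q' x) S :=
    (hωint.mono_set (hQST.trans hT𝒳)).comp_mul_deriv₀ hS hQ hQ'pos hQinj
  have hA4' : ∫ x in S, ω x = ∫ x in S, ω x * Q' x := by
    simp_rw [mul_one_sub] at hA4
    rwa [integral_sub (hωint.mono_set hS𝒳) hint3, sub_eq_zero] at hA4
  have hT : NullMeasurableSet T := hST ▸ h𝒳.nullMeasurableSet.diff hS
  have htail : ∫ y in T \ Q '' S, ωt y = ∫ y in T \ Q '' S, ω y :=
    setIntegral_congr_fun₀ (hT.diff hQS) hωt_pos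
  calc ∫ x in 𝒳, ω x = (∫ x in S, ω x) + ∫ x in T, ω x := by
        rw [← hST, ← integral_inter_add_sdiff₀ hS hωint, inter_eq_right.2 hS𝒳]
    _ = (∫ x in S, ωt (Q x) * Q' x) + ∫ y in T \ Q '' S, ωt y := by
        rw [← integral_inter_add_sdiff₀ hQS (hωint.mono_set hT𝒳),
          inter_eq_right.2 hQST, hcov ω, hA4', ← add_assoc, ← integral_add hint3 hωQ, htail]
        congr 1
        exact setIntegral_congr_fun₀ hS fun x hx => by simp only [hωt_link x hx, add_mul]
    _ = ∫ x in T, ωt x := by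
        rw [← hcov ωt, ← integral_inter_add_sdiff₀ hQS hint2, inter_eq_right.2 hQST]
    _ = ∫ x in 𝒳 \ S, ωt x := by rw [hST]

/-- Proposition 1(2) of Kitagawa–Wang–Xu: under (A1)–(A4), the total transformed
weight equals the total original weight. -/
theorem prop1_part2
    (𝒳 : Set ℝ) (h𝒳 : MeasurableSet 𝒳)
    (ω g g' Q Q' ωt : ℝ → ℝ)
    (hg : ∀ x, HasDerivAt g (g' x) x)
    (hωint : IntegrableOn ω 𝒳)
    (hQdiff : ∀ x ∈ {x ∈ 𝒳 | ω x < 0}, HasDerivAt Q (Q' x) x)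
    (hQ'pos : ∀ x ∈ {x ∈ 𝒳 | ω x < 0}, 0 < Q' x)
    (hQinj : Set.InjOn Q {x ∈ 𝒳 | ω x < 0})
    (hQmaps : Set.MapsTo Q {x ∈ 𝒳 | ω x < 0} {x ∈ 𝒳 | 0 ≤ ω x})
    -- defining properties of the transformed weights ω̃
    (hωt_link : ∀ x ∈ {x ∈ 𝒳 | ω x < 0}, ωt (Q x) = ω x + ω (Q x))
    (hωt_pos : ∀ x ∈ {x ∈ 𝒳 | 0 ≤ ω x} \ (Q '' {x ∈ 𝒳 | ω x < 0}), ωt x = ω x)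
    (hωt_zero : ∀ x, x ∉ {x ∈ 𝒳 | 0 ≤ ω x} → ωt x = 0)
    -- integrability assumptions
    (hint2 : IntegrableOn ωt {x ∈ 𝒳 | 0 ≤ ω x})
    (hint3 : IntegrableOn (fun x => ω x * Q' x) {x ∈ 𝒳 | ω x < 0})
    -- (A1): g' matches at linked points
    (hA1 : ∀ x ∈ {x ∈ 𝒳 | ω x < 0}, g' x = g' (Q x))
    -- (A2): net weight is nonnegative
    (hA2 : ∀ x ∈ {x ∈ 𝒳 | ω x < 0}, 0 ≤ ω x + ω (Q x))
    -- (A3): derivative condition on Q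
    (hA3 : ∫ x in {x ∈ 𝒳 | ω x < 0}, ω x * (1 - Q' x) * g' x = 0)
    -- (A4): additional derivative condition on Q
    (hA4 : ∫ x in {x ∈ 𝒳 | ω x < 0}, ω x * (1 - Q' x) = 0) :
    ∫ x in 𝒳, ω x = ∫ x in 𝒳 \ {x ∈ 𝒳 | ω x < 0}, ωt x :=
  prop1_part2_general 𝒳 h𝒳 ω Q Q' ωt hωint hQdiff hQ'pos hQinj hQmaps hωt_link hωt_pos hint2 hint3
    hA4
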